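/- Let ε > 0, let m and τ be real numbers with 0 < m ≤ τ, let λ ∈ [0,1), and let δ ≥ 0. Suppose 0 ≤ p ≤ (e^{mε} − 1 + 2δ) / ( 2(e^{τε} − e^{mε} + (1+e^{mε})λ)/(e^{τε}+1) + e^{mε} − 1 ). Then for all q, q' ∈ [0,1] satisfying q ≤ e^{τε} q' + λ, q' ≤ e^{τε} q + λ, 1−q ≤ e^{τε}(1−q') + λ, and 1−q' ≤ e^{τε}(1−q) + λ, it holds that p·q + (1−p)/2 ≤ e^{mε} ( p·q' + (1−p)/2 ) + δ. (This is the privacy guarantee of classical randomized response with constant success probability p: if the true majority is (τε, λ)-differentially private, then outputting it with probability p and a fair coin otherwise is (mε, δ)-differentially private.) -/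
import Mathlib


/-- privacy guarantee of classical randomized response with constant
success probability `p`: if the true majority output probabilities `q, q'` on
adjacent datasets satisfy the `(τε, λ)`-DP constraints, and `p` is at most the
stated bound, then `p·q + (1−p)/2 ≤ e^{mε}(p·q' + (1−p)/2) + δ`. -/
theorem statement8 (ε m τ lam δ p : ℝ) (hε : 0 < ε) (hm : 0 < m) (hmτ : m ≤ τ)
    (hlam0 : 0 ≤ lam) (hlam1 : lam < 1) (hδ : 0 ≤ δ)
    (hp0 : 0 ≤ p)
    (hp : p ≤ (Real.exp (m * ε) - 1 + 2 * δ) /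
        (2 * (Real.exp (τ * ε) - Real.exp (m * ε) + (1 + Real.exp (m * ε)) * lam)
            / (Real.exp (τ * ε) + 1)
          + Real.exp (m * ε) - 1)) :
    ∀ q q' : ℝ, 0 ≤ q → q ≤ 1 → 0 ≤ q' → q' ≤ 1 →
      q ≤ Real.exp (τ * ε) * q' + lam →
      q' ≤ Real.exp (τ * ε) * q + lam →
      1 - q ≤ Real.exp (τ * ε) * (1 - q') + lam →
      1 - q' ≤ Real.exp (τ * ε) * (1 - q) + lam →
      p * q + (1 - p) / 2 ≤ Real.exp (m * ε) * (p * q' + (1 - p) / 2) + δ := by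
  intro q q' hq0 hq1 hq'0 hq'1 h1 h2 h3 h4
  set T := Real.exp (τ * ε) with hTdef
  set E := Real.exp (m * ε) with hEdef
  have hE1 : 1 < E := by rw [Real.one_lt_exp_iff]; positivity
  have hET : E ≤ T := Real.exp_le_exp.mpr (by nlinarith)
  have hT1 : 1 < T := lt_of_lt_of_le hE1 hET
  have hTpos : (0:ℝ) < T + 1 := by linarith
  set S : ℝ := (T - E + (1 + E) * lam) / (T + 1) with hSdef
  have hS0 : 0 ≤ S := by
    apply div_nonneg _ (le_of_lt hTpos)
    nlinarith
  -- key bound: q - E*q' ≤ S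
  have hM' : (q - E * q') * (T + 1) ≤ T - E + (1 + E) * lam := by
    nlinarith [mul_nonneg (by nlinarith : (0:ℝ) ≤ T * E - 1)
        (by linarith : (0:ℝ) ≤ T * q' + lam - q),
      mul_nonneg (by linarith : (0:ℝ) ≤ T - E)
        (by linarith : (0:ℝ) ≤ T * (1 - q) + lam - (1 - q'))]
  have hM : q - E * q' ≤ S := by
    rw [hSdef, le_div_iff₀ hTpos]; exact hM'
  have hD : 0 < 2 * S + E - 1 := by nlinarith
  have hp' : p ≤ (E - 1 + 2 * δ) / (2 * S + E - 1) := by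
    have : 2 * (T - E + (1 + E) * lam) / (T + 1) + E - 1 = 2 * S + E - 1 := by
      rw [hSdef]; ring
    rwa [this] at hp
  have hPD : p * (2 * S + E - 1) ≤ E - 1 + 2 * δ := (le_div_iff₀ hD).mp hp'
  have hps : p * (q - E * q') ≤ p * S := mul_le_mul_of_nonneg_left hM hp0
  nlinarith
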